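/- Let I be a finite set, for each i ∈ I let m_i be a positive integer and R_i a unital subring of ℚ such that every prime dividing m_i is not invertible in R_i. Let R = ∏_i R_i and K = ℤ·1 + ∏_i m_i R_i. Then the group of units of K equals K ∩ R*, i.e., every element of K that is invertible in R has its inverse in K. -/

import Mathlib

/-!
If `c = γ + (m_i y_i)_i` is a unit of `∏ R_i`, then `γ` is coprime to every `m_i`: a common
prime factor `p` would divide `c_i` in `R_i`, making `p` a unit there. Hence `δ γ + k n = 1`
with `n = ∏ m_i`, and substituting `γ = c_i - m_i y_i` into `c_i⁻¹ = c_i⁻¹ (δ γ + k n)` gives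
`c⁻¹ = δ + (m_i c_i⁻¹ (k n / m_i - δ y_i))_i ∈ K`.
-/

open Finset

theorem isCoprime_of_isUnit_intCast_add_natCast_mul {A : Type*} [CommRing A] {γ : ℤ} {m : ℕ}
    {y : A} (hu : IsUnit ((γ : A) + m * y))
    (hm : ∀ p : ℕ, p.Prime → p ∣ m → ¬ IsUnit (p : A)) : IsCoprime γ (m : ℤ) := by
  rw [Int.isCoprime_iff_gcd_eq_one]
  by_contra hgcd
  obtain ⟨p, hp, hpgcd⟩ := Nat.exists_prime_and_dvd hgcd
  have hpγ : (p : ℤ) ∣ γ := Int.ofNat_dvd_left.mpr (hpgcd.trans (Int.gcd_dvd_natAbs_left _ _))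
  have hpm : p ∣ m := by simpa using hpgcd.trans (Int.gcd_dvd_natAbs_right γ m)
  have hdvd : (p : A) ∣ (γ : A) + m * y := by
    refine dvd_add ?_ ((Nat.cast_dvd_cast hpm).mul_right y)
    exact_mod_cast Int.cast_dvd_cast _ _ hpγ
  exact hm p hp hpm (isUnit_of_dvd_unit hdvd hu)

theorem eq_intCast_add_natCast_mul_of_mul_eq_one {A : Type*} [CommRing A] {γ δ k n : ℤ} {m : ℕ}
    {c d y : A} (hδk : δ * γ + k * (m * n) = 1) (hc : c = γ + m * y) (hcd : c * d = 1) :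
    d = δ + m * (d * (k * n - δ * y)) := by
  have hδk' := congrArg (Int.cast : ℤ → A) hδk
  push_cast at hδk'
  subst hc
  linear_combination (-d) * hδk' + δ * hcd

theorem Pi.exists_intCast_add_natCast_mul_of_mul_eq_one {I : Type*} [Fintype I]
    {A : I → Type*} [∀ i, CommRing (A i)] {m : I → ℕ}
    (hm : ∀ i, ∀ p : ℕ, p.Prime → p ∣ m i → ¬ IsUnit (p : A i)) {γ : ℤ} {c d y : ∀ i, A i}
    (hc : ∀ i, c i = γ + m i * y i) (hcd : c * d = 1) :
    ∃ (δ : ℤ) (z : ∀ i, A i), ∀ i, d i = δ + m i * z i := by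
  classical
  have hcop : IsCoprime γ (∏ i, (m i : ℤ)) := IsCoprime.prod_right fun i _ =>
    isCoprime_of_isUnit_intCast_add_natCast_mul (hc i ▸ IsUnit.of_mul_eq_one _ (congrFun hcd i))
      (hm i)
  obtain ⟨δ, k, hδk⟩ := hcop
  refine ⟨δ, fun i => d i * (k * ∏ j ∈ univ.erase i, (m j : ℤ) - δ * y i), fun i => ?_⟩
  refine eq_intCast_add_natCast_mul_of_mul_eq_one ?_ (hc i) (congrFun hcd i)
  rwa [mul_prod_erase univ (fun j => (m j : ℤ)) (mem_univ i)]

theorem stmt_6 (I : Type*) [Fintype I] (R : I → Subring ℚ) (m : I → ℕ)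
    (hprime : ∀ i, ∀ p : ℕ, p.Prime → p ∣ m i →
      ¬ IsUnit (⟨((p : ℚ)), by exact_mod_cast natCast_mem (R i) p⟩ : R i))
    (K : Set (∀ i, R i))
    (hK : K = {c | ∃ (γ : ℤ) (y : ∀ i, R i),
      ∀ i, (c i : ℚ) = (γ : ℚ) + (m i : ℚ) * (y i : ℚ)})
    (c : ∀ i, R i) (hc : c ∈ K) :
    IsUnit c ↔ ∃ d ∈ K, c * d = 1 := by
  refine ⟨fun hcu => ?_, fun ⟨d, _, hcd⟩ => .of_mul_eq_one d hcd⟩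
  subst hK
  obtain ⟨γ, y, hy⟩ := hc
  obtain ⟨d, hcd⟩ := hcu.exists_right_inv
  obtain ⟨δ, z, hz⟩ := Pi.exists_intCast_add_natCast_mul_of_mul_eq_one (γ := γ) (y := y) hprime
    (fun i => Subtype.ext (by simp [hy i])) hcd
  exact ⟨d, ⟨δ, z, fun i => by simp [hz i]⟩, hcd⟩
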